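/- arXiv:1004.1724 — 8 statements merged into one kernel-verified Lean document; each statement's English description precedes it below -/
import Mathlib

section
/- The set S(n,r), consisting of all strings i_1⋯i_r | j_1⋯j_{n-r} over the totally ordered alphabet A(n,r) = {n-r̄ < ⋯ < 1̄ < 0 < 1̃ < ⋯ < r̃} with i_1 ≽ ⋯ ≽ i_r ≽ 0 ≽ j_1 ≽ ⋯ ≽ j_{n-r}, where the nonzero i's are strictly decreasing and the nonzero j's are strictly decreasing, is closed under componentwise meet and join in the product order, and hence is a distributive sublattice of the n-fold product of the chain A(n,r). -/
open Finset

/-- The alphabet `A(n,r)` is encoded as the integer interval `[-(n-r), r]`: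
the barred symbol `k̄` is `-k`, the tilded symbol `k̃` is `k`, and `0` is `0`.
A string of `S(n,r)` is a function `w : Fin n → ℤ` satisfying: the first `r`
entries lie in `[0,r]`, the last `n-r` entries lie in `[-(n-r),0]`, the whole
string is weakly decreasing, the nonzero entries of the positive part are
strictly decreasing, and the nonzero entries of the negative part are strictly
decreasing. -/
def Admissible (n r : ℕ) (w : Fin n → ℤ) : Prop :=
  (∀ i : Fin n, (i : ℕ) < r → 0 ≤ w i ∧ w i ≤ (r : ℤ)) ∧
  (∀ i : Fin n, r ≤ (i : ℕ) → -((n - r : ℕ) : ℤ) ≤ w i ∧ w i ≤ 0) ∧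
  (∀ i j : Fin n, i ≤ j → w j ≤ w i) ∧
  (∀ i j : Fin n, i < j → (j : ℕ) < r → w j ≠ 0 → w j < w i) ∧
  (∀ i j : Fin n, i < j → r ≤ (i : ℕ) → w i ≠ 0 → w j < w i)

/-- The componentwise (product) order on strings. -/
def sle {n : ℕ} (w w' : Fin n → ℤ) : Prop := ∀ i, w i ≤ w' i

/-- Strict componentwise order. -/
def slt {n : ℕ} (w w' : Fin n → ℤ) : Prop := sle w w' ∧ w ≠ w'

/-- `w'` covers `w` in the poset `S(n,r)`. -/
def SCovers (n r : ℕ) (w w' : Fin n → ℤ) : Prop :=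
  slt w w' ∧ ¬ ∃ u : Fin n → ℤ, Admissible n r u ∧ slt w u ∧ slt u w'

/-- The rank function `ρ` of `S(n,r)`:
`ρ(i_1⋯i_r|j_1⋯j_{n-r}) = Σ i_k + Σ (k - j_k)` (symbols read as integers). -/
def rho (n r : ℕ) (w : Fin n → ℤ) : ℤ :=
  ∑ i : Fin n, (if (i : ℕ) < r then w i else ((((i : ℕ) - r : ℕ) : ℤ) + 1 + w i))

/-- `wc` is the complement of `w` in `S(n,r)`: the nonzero symbols of `wc`
are exactly the elements of `A(n,r) ∖ {0}` that are not symbols of `w`. -/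
def ComplOf (n r : ℕ) (w wc : Fin n → ℤ) : Prop :=
  ∀ a : ℤ, a ≠ 0 →
    ((∃ i, wc i = a) ↔ (-((n - r : ℕ) : ℤ) ≤ a ∧ a ≤ (r : ℤ) ∧ ¬ ∃ i, w i = a))

/-- The top rank `R(n,r) = C(r+1,2) + C(n-r+1,2)`. -/
def Rnk (n r : ℕ) : ℕ := r * (r + 1) / 2 + (n - r) * (n - r + 1) / 2

/-- `s(n,r,k)`: the number of elements of `S(n,r)` of rank `k`. -/
noncomputable def sCount (n r k : ℕ) : ℕ :=
  {w : Fin n → ℤ | Admissible n r w ∧ rho n r w = (k : ℤ)}.ncard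

/-- The minimum `0⋯0|12⋯(n-r)` of `S(n,r)`. -/
def botStr (n r : ℕ) : Fin n → ℤ :=
  fun i => if (i : ℕ) < r then 0 else -((((i : ℕ) - r : ℕ) : ℤ) + 1)

/-- The maximum `r(r-1)⋯1|0⋯0` of `S(n,r)`. -/
def topStr (n r : ℕ) : Fin n → ℤ :=
  fun i => if (i : ℕ) < r then (r : ℤ) - ((i : ℕ) : ℤ) else 0

/-- The string `r(r-1)⋯1|12⋯(n-r)` containing every nonzero symbol. -/
def fullStr (n r : ℕ) : Fin n → ℤ :=
  fun i => if (i : ℕ) < r then (r : ℤ) - ((i : ℕ) : ℤ)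
           else -((((i : ℕ) - r : ℕ) : ℤ) + 1)

/-- An `(n,r)`-function: increasing on the alphabet, zero at `0`,
and strictly negative on the barred symbols. -/
def IsNRFun (n r : ℕ) (f : ℤ → ℝ) : Prop :=
  f 0 = 0 ∧
  (∀ a b : ℤ, -((n - r : ℕ) : ℤ) ≤ a → a ≤ b → b ≤ (r : ℤ) → f a ≤ f b) ∧
  (∀ a : ℤ, -((n - r : ℕ) : ℤ) ≤ a → a < 0 → f a < 0)

/-- The total sum of `f` over the alphabet `A(n,r)` is nonnegative
(the defining condition of an `(n,r)`-weight function, since `f 0 = 0`). -/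
def TotalNN (n r : ℕ) (f : ℤ → ℝ) : Prop :=
  0 ≤ ∑ a ∈ Finset.Icc (-((n - r : ℕ) : ℤ)) (r : ℤ), f a

/-- The sum function `Σ_f` induced by `f` on strings. -/
def Sf (n : ℕ) (f : ℤ → ℝ) (w : Fin n → ℤ) : ℝ := ∑ i : Fin n, f (w i)

/-! The bounds and the weak monotonicity are preserved by `min` and `max` in any chain. Since `0`
is the least value of the positive part and the largest value of the negative part, the two
strictness conditions read `0 < w j → w j < w i` and `w i < 0 → w j < w i`, and implications of
this shape are preserved by `min` and `max` as well. -/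

section LinearOrder

variable {α : Type*} [LinearOrder α] {a a' b b' c : α}

theorem min_lt_min_of_lt_imp (h : c < a → a < b) (h' : c < a' → a' < b') (hc : c < min a a') :
    min a a' < min b b' :=
  min_lt_min (h (lt_min_iff.1 hc).1) (h' (lt_min_iff.1 hc).2)

theorem max_lt_max_of_lt_imp (h : c < a → a < b) (h' : c < a' → a' < b') (hc : c < max a a') :
    max a a' < max b b' := by
  rcases le_total a a' with haa' | haa'
  · rw [max_eq_right haa'] at hc ⊢
    exact lt_max_of_lt_right (h' hc)
  · rw [max_eq_left haa'] at hc ⊢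
    exact lt_max_of_lt_left (h hc)

theorem max_lt_max_of_imp_lt (h : b < c → a < b) (h' : b' < c → a' < b') (hc : max b b' < c) :
    max a a' < max b b' :=
  min_lt_min_of_lt_imp (α := αᵒᵈ) h h' hc

theorem min_lt_min_of_imp_lt (h : b < c → a < b) (h' : b' < c → a' < b') (hc : min b b' < c) :
    min a a' < min b b' :=
  max_lt_max_of_lt_imp (α := αᵒᵈ) h h' hc

end LinearOrder

namespace Admissible

variable {n r : ℕ} {w : Fin n → ℤ} {i j : Fin n}

theorem lt_of_pos (hw : Admissible n r w) (hij : i < j) (hjr : (j : ℕ) < r) :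
    0 < w j → w j < w i :=
  fun h => hw.2.2.2.1 i j hij hjr h.ne'

theorem lt_of_neg (hw : Admissible n r w) (hij : i < j) (hir : r ≤ (i : ℕ)) :
    w i < 0 → w j < w i :=
  fun h => hw.2.2.2.2 i j hij hir h.ne

end Admissible

section Lattice

variable {n r : ℕ} {w w' : Fin n → ℤ}

theorem admissible_min (hw : Admissible n r w) (hw' : Admissible n r w') :
    Admissible n r (fun i => min (w i) (w' i)) := by
  refine ⟨fun i hi => ?_, fun i hi => ?_, fun i j hij => ?_, fun i j hij hjr hne => ?_,
    fun i j hij hir hne => ?_⟩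
  · exact ⟨le_min (hw.1 i hi).1 (hw'.1 i hi).1, min_le_of_left_le (hw.1 i hi).2⟩
  · exact ⟨le_min (hw.2.1 i hi).1 (hw'.2.1 i hi).1, min_le_of_left_le (hw.2.1 i hi).2⟩
  · exact min_le_min (hw.2.2.1 i j hij) (hw'.2.2.1 i j hij)
  · have hpos : 0 < min (w j) (w' j) :=
      lt_of_le_of_ne (le_min (hw.1 j hjr).1 (hw'.1 j hjr).1) (Ne.symm hne)
    exact min_lt_min_of_lt_imp (hw.lt_of_pos hij hjr) (hw'.lt_of_pos hij hjr) hpos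
  · have hneg : min (w i) (w' i) < 0 :=
      lt_of_le_of_ne (min_le_of_left_le (hw.2.1 i hir).2) hne
    exact min_lt_min_of_imp_lt (hw.lt_of_neg hij hir) (hw'.lt_of_neg hij hir) hneg

theorem admissible_max (hw : Admissible n r w) (hw' : Admissible n r w') :
    Admissible n r (fun i => max (w i) (w' i)) := by
  refine ⟨fun i hi => ?_, fun i hi => ?_, fun i j hij => ?_, fun i j hij hjr hne => ?_,
    fun i j hij hir hne => ?_⟩
  · exact ⟨le_max_of_le_left (hw.1 i hi).1, max_le (hw.1 i hi).2 (hw'.1 i hi).2⟩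
  · exact ⟨le_max_of_le_left (hw.2.1 i hi).1, max_le (hw.2.1 i hi).2 (hw'.2.1 i hi).2⟩
  · exact max_le_max (hw.2.2.1 i j hij) (hw'.2.2.1 i j hij)
  · have hpos : 0 < max (w j) (w' j) :=
      lt_of_le_of_ne (le_max_of_le_left (hw.1 j hjr).1) (Ne.symm hne)
    exact max_lt_max_of_lt_imp (hw.lt_of_pos hij hjr) (hw'.lt_of_pos hij hjr) hpos
  · have hneg : max (w i) (w' i) < 0 :=
      lt_of_le_of_ne (max_le (hw.2.1 i hir).2 (hw'.2.1 i hir).2) hne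
    exact max_lt_max_of_imp_lt (hw.lt_of_neg hij hir) (hw'.lt_of_neg hij hir) hneg

end Lattice

theorem Snr_closed_min_max_general (n r : ℕ) (w w' : Fin n → ℤ)
    (hw : Admissible n r w) (hw' : Admissible n r w') :
    Admissible n r (fun i => min (w i) (w' i)) ∧
    Admissible n r (fun i => max (w i) (w' i)) :=
  ⟨admissible_min hw hw', admissible_max hw hw'⟩

/-- `S(n,r)` is closed under componentwise meet and join in the
product order on `A(n,r)^n`, hence a distributive sublattice of the product. -/
theorem Snr_closed_min_max (n r : ℕ) (hr : r ≤ n) (w w' : Fin n → ℤ)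
    (hw : Admissible n r w) (hw' : Admissible n r w') :
    Admissible n r (fun i => min (w i) (w' i)) ∧
    Admissible n r (fun i => max (w i) (w' i)) :=
  Snr_closed_min_max_general n r w w' hw hw'
end

section
/- For 1 ≤ d ≤ n, the subset S(n,d,r) of S(n,r) consisting of all strings with exactly d symbols different from 0 is closed under the meet and join of S(n,r), and hence is a distributive sublattice of S(n,r). -/
open Finset

/-! An admissible string is weakly decreasing, so its positive entries occupy an initial segment
of the positions and its negative entries a final segment, and such segments are nested. Hence
if `w`, `w'` have `p`, `p'` positive and `q`, `q'` negative entries, the meet has `min p p'`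
positive and `max q q'` negative entries, and the join `max p p'` and `min q q'`; when
`p + q = p' + q'` both totals equal `p + q`. -/

namespace Finset

variable {α : Type*} [DecidableEq α] {s t : Finset α}

lemma card_inter_of_total (h : s ⊆ t ∨ t ⊆ s) : #(s ∩ t) = min #s #t := by
  rcases h with h | h
  · rw [inter_eq_left.mpr h, min_eq_left (card_le_card h)]
  · rw [inter_eq_right.mpr h, min_eq_right (card_le_card h)]

lemma card_union_of_total (h : s ⊆ t ∨ t ⊆ s) : #(s ∪ t) = max #s #t := by
  rcases h with h | h
  · rw [union_eq_right.mpr h, max_eq_right (card_le_card h)]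
  · rw [union_eq_left.mpr h, max_eq_left (card_le_card h)]

end Finset

section Antitone

variable {ι α : Type*} [Fintype ι] [LinearOrder ι] [LinearOrder α] [Zero α]

lemma card_filter_ne_zero_eq_add (w : ι → α) :
    #{i | w i ≠ 0} = #{i | 0 < w i} + #{i | w i < 0} := by
  rw [← card_union_of_disjoint (disjoint_filter.mpr fun i _ h h' => h.not_gt h'), ← filter_or]
  simp only [ne_iff_lt_or_gt, or_comm]

variable {w w' : ι → α}

lemma Antitone.filter_pos_total (hw : Antitone w) (hw' : Antitone w') :
    ({i | 0 < w i} : Finset ι) ⊆ ({i | 0 < w' i} : Finset ι) ∨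
      ({i | 0 < w' i} : Finset ι) ⊆ ({i | 0 < w i} : Finset ι) := by
  have hlower {v : ι → α} (hv : Antitone v) : IsLowerSet {i | 0 < v i} :=
    fun _ _ hij h => h.trans_le (hv hij)
  simpa only [← coe_subset, coe_filter_univ] using (hlower hw).total (hlower hw')

lemma Antitone.filter_neg_total (hw : Antitone w) (hw' : Antitone w') :
    ({i | w i < 0} : Finset ι) ⊆ ({i | w' i < 0} : Finset ι) ∨
      ({i | w' i < 0} : Finset ι) ⊆ ({i | w i < 0} : Finset ι) := by
  have hupper {v : ι → α} (hv : Antitone v) : IsUpperSet {i | v i < 0} :=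
    fun _ _ hij h => (hv hij).trans_lt h
  simpa only [← coe_subset, coe_filter_univ] using (hupper hw).total (hupper hw')

lemma Antitone.card_filter_min_ne_zero (hw : Antitone w) (hw' : Antitone w')
    (h : #{i | w i ≠ 0} = #{i | w' i ≠ 0}) :
    #{i | min (w i) (w' i) ≠ 0} = #{i | w i ≠ 0} := by
  have hpos : #{i | 0 < min (w i) (w' i)} = min #{i | 0 < w i} #{i | 0 < w' i} := by
    rw [filter_congr fun i _ => lt_min_iff, filter_and]
    exact card_inter_of_total (hw.filter_pos_total hw')
  have hneg : #{i | min (w i) (w' i) < 0} = max #{i | w i < 0} #{i | w' i < 0} := by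
    rw [filter_congr fun i _ => min_lt_iff, filter_or]
    exact card_union_of_total (hw.filter_neg_total hw')
  simp only [card_filter_ne_zero_eq_add] at h ⊢
  omega

lemma Antitone.card_filter_max_ne_zero (hw : Antitone w) (hw' : Antitone w')
    (h : #{i | w i ≠ 0} = #{i | w' i ≠ 0}) :
    #{i | max (w i) (w' i) ≠ 0} = #{i | w i ≠ 0} := by
  have hpos : #{i | 0 < max (w i) (w' i)} = max #{i | 0 < w i} #{i | 0 < w' i} := by
    rw [filter_congr fun i _ => lt_max_iff, filter_or]
    exact card_union_of_total (hw.filter_pos_total hw')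
  have hneg : #{i | max (w i) (w' i) < 0} = min #{i | w i < 0} #{i | w' i < 0} := by
    rw [filter_congr fun i _ => max_lt_iff, filter_and]
    exact card_inter_of_total (hw.filter_neg_total hw')
  simp only [card_filter_ne_zero_eq_add] at h ⊢
  omega

end Antitone

namespace Admissible

variable {n r : ℕ} {w w' : Fin n → ℤ}

lemma antitone (hw : Admissible n r w) : Antitone w :=
  fun i j hij => hw.2.2.1 i j hij

lemma min (hw : Admissible n r w) (hw' : Admissible n r w') :
    Admissible n r (fun i => min (w i) (w' i)) := by
  obtain ⟨h1, h2, h3, h4, h5⟩ := hw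
  obtain ⟨h1', h2', h3', h4', h5'⟩ := hw'
  refine ⟨fun i hi => ?_, fun i hi => ?_, fun i j hij => ?_, fun i j hij hj => ?_,
    fun i j hij hi => ?_⟩ <;> dsimp only
  · have := h1 i hi; have := h1' i hi; omega
  · have := h2 i hi; have := h2' i hi; omega
  · have := h3 i j hij; have := h3' i j hij; omega
  · have := h1 j hj; have := h1' j hj; have := h4 i j hij hj; have := h4' i j hij hj; omega
  · have := h2 i hi; have := h2' i hi; have := h3 i j hij.le; have := h3' i j hij.le
    have := h5 i j hij hi; have := h5' i j hij hi; omega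

lemma max (hw : Admissible n r w) (hw' : Admissible n r w') :
    Admissible n r (fun i => max (w i) (w' i)) := by
  obtain ⟨h1, h2, h3, h4, h5⟩ := hw
  obtain ⟨h1', h2', h3', h4', h5'⟩ := hw'
  refine ⟨fun i hi => ?_, fun i hi => ?_, fun i j hij => ?_, fun i j hij hj => ?_,
    fun i j hij hi => ?_⟩ <;> dsimp only
  · have := h1 i hi; have := h1' i hi; omega
  · have := h2 i hi; have := h2' i hi; omega
  · have := h3 i j hij; have := h3' i j hij; omega
  · have := h1 j hj; have := h1' j hj; have := h3 i j hij.le; have := h3' i j hij.le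
    have := h4 i j hij hj; have := h4' i j hij hj; omega
  · have := h2 i hi; have := h2' i hi; have := h5 i j hij hi; have := h5' i j hij hi; omega

end Admissible

theorem Sndr_closed_min_max_general (n r d : ℕ) (w w' : Fin n → ℤ)
    (hw : Admissible n r w) (hw' : Admissible n r w')
    (hwd : (Finset.univ.filter fun i => w i ≠ 0).card = d)
    (hw'd : (Finset.univ.filter fun i => w' i ≠ 0).card = d) :
    (Admissible n r (fun i => min (w i) (w' i)) ∧
      (Finset.univ.filter fun i => min (w i) (w' i) ≠ 0).card = d) ∧
    (Admissible n r (fun i => max (w i) (w' i)) ∧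
      (Finset.univ.filter fun i => max (w i) (w' i) ≠ 0).card = d) := by
  have hcard := hwd.trans hw'd.symm
  exact ⟨⟨hw.min hw', (hw.antitone.card_filter_min_ne_zero hw'.antitone hcard).trans hwd⟩,
    ⟨hw.max hw', (hw.antitone.card_filter_max_ne_zero hw'.antitone hcard).trans hwd⟩⟩

/-- the set `S(n,d,r)` of strings with exactly `d` nonzero
symbols is closed under the meet and join of `S(n,r)`, hence a distributive
sublattice. -/
theorem Sndr_closed_min_max (n r d : ℕ) (hr : 1 ≤ r) (hrn : r ≤ n)
    (hd : 1 ≤ d) (hdn : d ≤ n) (w w' : Fin n → ℤ)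
    (hw : Admissible n r w) (hw' : Admissible n r w')
    (hwd : (Finset.univ.filter fun i => w i ≠ 0).card = d)
    (hw'd : (Finset.univ.filter fun i => w' i ≠ 0).card = d) :
    (Admissible n r (fun i => min (w i) (w' i)) ∧
      (Finset.univ.filter fun i => min (w i) (w' i) ≠ 0).card = d) ∧
    (Admissible n r (fun i => max (w i) (w' i)) ∧
      (Finset.univ.filter fun i => max (w i) (w' i) ≠ 0).card = d) :=
  Sndr_closed_min_max_general n r d w w' hw hw' hwd hw'd
end

section
/- For 0 ≤ r ≤ n, the lattice S(n,r) is isomorphic to the direct product S(r,r) × S(n−r,0). -/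
open Finset

/-- Concatenation of a positive part and a negative part. -/
def concatStr (n r : ℕ) (u : Fin r → ℤ) (v : Fin (n - r) → ℤ) : Fin n → ℤ :=
  fun i => if h : (i : ℕ) < r then u ⟨i, h⟩
           else v ⟨(i : ℕ) - r, by have := i.isLt; omega⟩

/-! A string of `S(n,r)` splits at position `r` into a string of `S(r,r)` and one of
`S(n-r,0)`. Every admissibility condition concerns a single part, except the weak decrease
across the split, which is automatic: positive symbols are `≥ 0` and negative ones `≤ 0`.
The order being componentwise, it splits as well. -/

def headStr {n r : ℕ} (hr : r ≤ n) (w : Fin n → ℤ) : Fin r → ℤ :=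
  fun i => w (Fin.castLE hr i)

def tailStr {n : ℕ} (r : ℕ) (w : Fin n → ℤ) : Fin (n - r) → ℤ :=
  fun k => w ⟨r + k, by omega⟩

section Concat

variable {n r : ℕ} {u u' : Fin r → ℤ} {v v' : Fin (n - r) → ℤ}

theorem concatStr_apply_of_lt {i : Fin n} (hi : (i : ℕ) < r) :
    concatStr n r u v i = u ⟨i, hi⟩ := by
  simp [concatStr, hi]

theorem concatStr_apply_of_le {i : Fin n} (hi : r ≤ (i : ℕ)) :
    concatStr n r u v i = v ⟨i - r, by omega⟩ := by
  simp [concatStr, Nat.not_lt.mpr hi]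

theorem headStr_concatStr (hr : r ≤ n) : headStr hr (concatStr n r u v) = u := by
  funext i
  exact concatStr_apply_of_lt (i := Fin.castLE hr i) i.isLt

theorem tailStr_concatStr : tailStr r (concatStr n r u v) = v := by
  funext k
  simp [tailStr, concatStr]

theorem concatStr_headStr_tailStr (hr : r ≤ n) (w : Fin n → ℤ) :
    concatStr n r (headStr hr w) (tailStr r w) = w := by
  funext i
  rcases lt_or_ge (i : ℕ) r with hi | hi
  · rw [concatStr_apply_of_lt hi]; rfl
  · rw [concatStr_apply_of_le hi]
    exact congrArg w (Fin.ext (Nat.add_sub_cancel' hi))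

theorem Admissible.headStr {w : Fin n → ℤ} (hr : r ≤ n) (hw : Admissible n r w) :
    Admissible r r (headStr hr w) := by
  obtain ⟨hrange, -, hmono, hstrict, -⟩ := hw
  exact ⟨fun i _ => hrange _ i.isLt, fun i hi => absurd i.isLt (Nat.not_lt.mpr hi),
    fun i j hij => hmono _ _ hij, fun i j hij hj => hstrict _ _ hij hj,
    fun i _ _ hi => absurd i.isLt (Nat.not_lt.mpr hi)⟩

theorem Admissible.tailStr {w : Fin n → ℤ} (hw : Admissible n r w) :
    Admissible (n - r) 0 (tailStr r w) := by
  obtain ⟨-, hrange, hmono, -, hstrict⟩ := hw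
  refine ⟨fun i hi => absurd hi (Nat.not_lt_zero _), fun i _ => ?_,
    fun i j hij => hmono _ _ ?_, fun i j _ hj => absurd hj (Nat.not_lt_zero _),
    fun i j hij _ => hstrict _ _ ?_ (Nat.le_add_right r i)⟩
  · rw [Nat.sub_zero]
    exact hrange _ (Nat.le_add_right r i)
  · exact Fin.mk_le_mk.mpr (Nat.add_le_add_left hij r)
  · exact Fin.mk_lt_mk.mpr (Nat.add_lt_add_left hij r)

theorem admissible_concatStr (hu : Admissible r r u) (hv : Admissible (n - r) 0 v) :
    Admissible n r (concatStr n r u v) := by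
  obtain ⟨hu_range, -, hu_mono, hu_strict, -⟩ := hu
  obtain ⟨-, hv_range, hv_mono, -, hv_strict⟩ := hv
  have hv_range' (k : Fin (n - r)) : -((n - r : ℕ) : ℤ) ≤ v k ∧ v k ≤ 0 := by
    simpa using hv_range k (Nat.zero_le _)
  refine ⟨fun i hi => ?_, fun i hi => ?_, fun i j hij => ?_, fun i j hij hj => ?_,
    fun i j hij hi => ?_⟩
  · rw [concatStr_apply_of_lt hi]
    exact hu_range _ hi
  · rw [concatStr_apply_of_le hi]
    exact hv_range' _
  · rcases lt_or_ge (j : ℕ) r with hj | hj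
    · have hi : (i : ℕ) < r := lt_of_le_of_lt hij hj
      rw [concatStr_apply_of_lt hi, concatStr_apply_of_lt hj]
      exact hu_mono _ _ hij
    rw [concatStr_apply_of_le hj]
    rcases lt_or_ge (i : ℕ) r with hi | hi
    · rw [concatStr_apply_of_lt hi]
      exact (hv_range' _).2.trans (hu_range _ hi).1
    · rw [concatStr_apply_of_le hi]
      exact hv_mono _ _ (Fin.mk_le_mk.mpr (Nat.sub_le_sub_right hij r))
  · have hi : (i : ℕ) < r := lt_trans hij hj
    rw [concatStr_apply_of_lt hi, concatStr_apply_of_lt hj]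
    exact hu_strict _ _ hij hj
  · have hj : r ≤ (j : ℕ) := le_trans hi (le_of_lt hij)
    rw [concatStr_apply_of_le hi, concatStr_apply_of_le hj]
    exact hv_strict _ _ (Fin.mk_lt_mk.mpr (by omega)) (Nat.zero_le _)

theorem sle_concatStr_iff (hr : r ≤ n) :
    sle (concatStr n r u v) (concatStr n r u' v') ↔ sle u u' ∧ sle v v' := by
  constructor
  · intro h
    have hhead : sle (headStr hr (concatStr n r u v)) (headStr hr (concatStr n r u' v')) :=
      fun i => h _
    have htail : sle (tailStr r (concatStr n r u v)) (tailStr r (concatStr n r u' v')) :=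
      fun k => h _
    rw [headStr_concatStr, headStr_concatStr] at hhead
    rw [tailStr_concatStr, tailStr_concatStr] at htail
    exact ⟨hhead, htail⟩
  · rintro ⟨hu, hv⟩ i
    rcases lt_or_ge (i : ℕ) r with hi | hi
    · rw [concatStr_apply_of_lt hi, concatStr_apply_of_lt hi]
      exact hu _
    · rw [concatStr_apply_of_le hi, concatStr_apply_of_le hi]
      exact hv _

end Concat

/-- `S(n,r) ≅ S(r,r) × S(n-r,0)`, via concatenation:
concatenation sends admissible pairs to admissible strings, every element of
`S(n,r)` is the concatenation of a unique admissible pair, and the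
componentwise order corresponds to the product order. -/
theorem Snr_prod_iso (n r : ℕ) (hr : r ≤ n) :
    (∀ (u : Fin r → ℤ) (v : Fin (n - r) → ℤ),
      Admissible r r u → Admissible (n - r) 0 v →
      Admissible n r (concatStr n r u v)) ∧
    (∀ w : Fin n → ℤ, Admissible n r w →
      ∃! p : (Fin r → ℤ) × (Fin (n - r) → ℤ),
        Admissible r r p.1 ∧ Admissible (n - r) 0 p.2 ∧
        concatStr n r p.1 p.2 = w) ∧
    (∀ (u u' : Fin r → ℤ) (v v' : Fin (n - r) → ℤ),
      Admissible r r u → Admissible (n - r) 0 v →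
      Admissible r r u' → Admissible (n - r) 0 v' →
      (sle (concatStr n r u v) (concatStr n r u' v') ↔ (sle u u' ∧ sle v v'))) := by
  refine ⟨fun u v hu hv => admissible_concatStr hu hv, fun w hw => ?_,
    fun u u' v v' _ _ _ _ => sle_concatStr_iff hr⟩
  refine ⟨(headStr hr w, tailStr r w),
    ⟨hw.headStr hr, hw.tailStr, concatStr_headStr_tailStr hr w⟩, ?_⟩
  rintro ⟨u, v⟩ ⟨-, -, rfl⟩
  rw [headStr_concatStr, tailStr_concatStr]
end

section
/- Let w = l_1⋯l_n and w' = l'_1⋯l'_n be elements of S(n,r). Then w' covers w in S(n,r) if and only if there is exactly one index k with l_k ≠ l'_k, and for that index l'_k covers l_k in the chain A(n,r). -/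
open Finset

/-- `w'` covers `w` in `S(n,r)` iff the two strings differ in
exactly one position `k`, and there `w' k` covers `w k` in the chain
`A(n,r)` (i.e. `w' k = w k + 1`, the alphabet being a chain of consecutive
integers). -/
theorem Snr_covers_iff (n r : ℕ) (hr : r ≤ n) (w w' : Fin n → ℤ)
    (hw : Admissible n r w) (hw' : Admissible n r w') :
    SCovers n r w w' ↔
      ∃ k : Fin n, w' k = w k + 1 ∧ ∀ j : Fin n, j ≠ k → w' j = w j := by
  classical
  constructor
  · rintro ⟨⟨hle, hne⟩, hnb⟩
    obtain ⟨k, hkne, heq⟩ : ∃ k : Fin n, w k ≠ w' k ∧ ∀ i : Fin n, i < k → w i = w' i := by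
      have hsne : (Finset.univ.filter (fun i : Fin n => w i ≠ w' i)).Nonempty := by
        rcases Function.ne_iff.mp hne with ⟨i, hi⟩
        exact ⟨i, by simp [hi]⟩
      refine ⟨(Finset.univ.filter (fun i : Fin n => w i ≠ w' i)).min' hsne, ?_, ?_⟩
      · have := Finset.min'_mem _ hsne
        simpa using this
      · intro i hi
        by_contra h
        exact absurd (Finset.min'_le _ i (by simp [h])) (not_le.mpr hi)
    have hklt : w k < w' k := lt_of_le_of_ne (hle k) hkne
    have hk1 : w k + 1 ≤ w' k := hklt
    set u := Function.update w k (w k + 1) with hudef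
    have huk : u k = w k + 1 := Function.update_self _ _ _
    have hui : ∀ i, i ≠ k → u i = w i := fun i hi => Function.update_of_ne hi _ _
    have hule : sle u w' := by
      intro i
      by_cases h : i = k
      · rw [h, huk]; exact hk1
      · rw [hui i h]; exact hle i
    have hadm : Admissible n r u := by
      obtain ⟨h1, h2, h3, h4, h5⟩ := hw
      obtain ⟨h1', h2', h3', h4', h5'⟩ := hw'
      refine ⟨?_, ?_, ?_, ?_, ?_⟩
      · intro i hi
        by_cases h : i = k
        · rw [h, huk]
          rw [h] at hi
          constructor
          · linarith [(h1 k hi).1]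
          · have := (h1' k hi).2
            linarith
        · rw [hui i h]; exact h1 i hi
      · intro i hi
        by_cases h : i = k
        · rw [h, huk]
          rw [h] at hi
          constructor
          · linarith [(h2 k hi).1]
          · have := (h2' k hi).2
            linarith
        · rw [hui i h]; exact h2 i hi
      · intro i j hij
        by_cases hik : i = k
        · by_cases hjk : j = k
          · rw [hik, hjk]
          · rw [hik, huk, hui j hjk]
            rw [hik] at hij
            have := h3 k j hij
            linarith
        · by_cases hjk : j = k
          · rw [hjk, huk, hui i hik]
            rw [hjk] at hij
            have hik' : i < k := lt_of_le_of_ne hij hik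
            have h1eq := heq i hik'
            have := h3' i k hij
            linarith
          · rw [hui i hik, hui j hjk]; exact h3 i j hij
      · intro i j hij hjr hjne
        by_cases hik : i = k
        · have hjk : j ≠ k := by
            intro h
            rw [h, ← hik] at hij
            exact absurd hij (lt_irrefl _)
          rw [hik, huk, hui j hjk]
          rw [hik] at hij
          have := h3 k j hij.le
          linarith
        · by_cases hjk : j = k
          · rw [hjk, huk, hui i hik]
            rw [hjk] at hij hjr
            have hwk0 : 0 ≤ w k := (h1 k hjr).1
            have hwk' : w' k ≠ 0 := by
              intro h
              rw [h] at hk1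
              linarith
            have hlt := h4' i k hij hjr hwk'
            have h1eq := heq i hij
            linarith
          · rw [hui i hik, hui j hjk]
            rw [hui j hjk] at hjne
            exact h4 i j hij hjr hjne
      · intro i j hij hir hine
        by_cases hik : i = k
        · have hjk : j ≠ k := by
            intro h
            rw [h, ← hik] at hij
            exact absurd hij (lt_irrefl _)
          rw [hik, huk, hui j hjk]
          rw [hik] at hij
          have := h3 k j hij.le
          linarith
        · by_cases hjk : j = k
          · rw [hjk, huk, hui i hik]
            rw [hjk] at hij
            rw [hui i hik] at hine
            have h1eq := heq i hij
            have hine' : w' i ≠ 0 := by rw [← h1eq]; exact hine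
            have := h5' i k hij hir hine'
            linarith
          · rw [hui i hik, hui j hjk]
            rw [hui i hik] at hine
            exact h5 i j hij hir hine
    have hune : u ≠ w := by
      intro h
      have := congrFun h k
      rw [huk] at this
      linarith
    by_cases huw' : u = w'
    · refine ⟨k, ?_, ?_⟩
      · rw [← huw', huk]
      · intro j hj; rw [← huw', hui j hj]
    · exact absurd ⟨u, hadm,
        ⟨fun i => by
          by_cases h : i = k
          · rw [h, huk]; linarith
          · rw [hui i h], Ne.symm hune⟩, hule, huw'⟩ hnb
  · rintro ⟨k, hk, hj⟩
    refine ⟨⟨fun i => ?_, ?_⟩, ?_⟩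
    · by_cases h : i = k
      · rw [h, hk]; linarith
      · rw [hj i h]
    · intro h
      have := congrFun h k
      rw [hk] at this
      linarith
    · rintro ⟨u, hu, ⟨hwu, hwune⟩, ⟨huw', huw'ne⟩⟩
      have heq : ∀ j, j ≠ k → u j = w j := fun j hne =>
        le_antisymm (by rw [← hj j hne]; exact huw' j) (hwu j)
      have hcase : u k = w k ∨ u k = w k + 1 := by
        have h1 := hwu k
        have h2 := huw' k
        rw [hk] at h2
        omega
      rcases hcase with h | h
      · apply hwune
        funext j
        by_cases hh : j = k
        · rw [hh, h]
        · rw [heq j hh]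
      · apply huw'ne
        funext j
        by_cases hh : j = k
        · rw [hh, h, hk]
        · rw [heq j hh, hj j hh]
end

section
/- Define ρ : S(n,r) → ℕ by ρ(i_1⋯i_r|j_1⋯j_{n-r}) = i_1 + ⋯ + i_r + (1 − j_1) + ⋯ + ((n−r) − j_{n-r}), reading symbols as integers. Then ρ(0⋯0|12⋯(n−r)) = 0, and whenever w' covers w in S(n,r), ρ(w') = ρ(w) + 1; consequently ρ is the rank function of the graded lattice S(n,r). -/
open Finset

lemma exists_step (n r : ℕ) (w w' : Fin n → ℤ) (hw : Admissible n r w)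
    (hw' : Admissible n r w') (hlt : slt w w') :
    ∃ u : Fin n → ℤ, Admissible n r u ∧ slt w u ∧ sle u w' ∧
      rho n r u = rho n r w + 1 := by
  classical
  obtain ⟨hle, hne⟩ := hlt
  obtain ⟨h1, h2, h3, h4, h5⟩ := hw
  obtain ⟨h1', h2', h3', h4', h5'⟩ := hw'
  have hex : (Finset.univ.filter (fun j : Fin n => w j ≠ w' j)).Nonempty := by
    by_contra h
    apply hne; funext j
    by_contra hj
    exact h ⟨j, by simp [hj]⟩
  obtain ⟨i, hi, hmin⟩ :=
    (Finset.univ.filter (fun j : Fin n => w j ≠ w' j)).exists_min_image id hex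
  have hine : w i ≠ w' i := by simpa using hi
  have hwi : w i < w' i := lt_of_le_of_ne (hle i) hine
  have heq : ∀ a : Fin n, a < i → w a = w' a := by
    intro a ha
    by_contra hane
    exact absurd (hmin a (by simp [hane])) (not_le.mpr ha)
  set u : Fin n → ℤ := Function.update w i (w i + 1) with hu
  have hui : u i = w i + 1 := Function.update_self i _ w
  have hunot : ∀ j, j ≠ i → u j = w j := fun j hj => Function.update_of_ne hj _ w
  have huw : ∀ j, w j ≤ u j := by
    intro j
    by_cases hj : j = i
    · subst hj; rw [hui]; omega
    · rw [hunot j hj]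
  have huw' : ∀ j, u j ≤ w' j := by
    intro j
    by_cases hj : j = i
    · subst hj; rw [hui]; omega
    · rw [hunot j hj]; exact hle j
  refine ⟨u, ⟨?_, ?_, ?_, ?_, ?_⟩, ⟨huw, ?_⟩, huw', ?_⟩
  · intro j hj
    exact ⟨le_trans (h1 j hj).1 (huw j), le_trans (huw' j) (h1' j hj).2⟩
  · intro j hj
    exact ⟨le_trans (h2 j hj).1 (huw j), le_trans (huw' j) (h2' j hj).2⟩
  · intro a b hab
    by_cases hb : i = b
    · subst hb
      by_cases ha : i = a
      · subst ha; exact le_refl _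
      · have ha' : a ≠ i := fun h => ha h.symm
        have hai : a < i := lt_of_le_of_ne hab ha'
        rw [hunot a ha', heq a hai]
        exact le_trans (huw' i) (h3' a i hab)
    · have hb' : b ≠ i := fun h => hb h.symm
      rw [hunot b hb']
      by_cases ha : i = a
      · subst ha; rw [hui]
        have := h3 i b hab; omega
      · have ha' : a ≠ i := fun h => ha h.symm
        rw [hunot a ha']; exact h3 a b hab
  · intro a b hab hbr hbne
    by_cases hb : i = b
    · subst hb
      have ha' : a ≠ i := ne_of_lt hab
      have hwi0 : (0:ℤ) ≤ w i := (h1 i hbr).1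
      have hw'ne : w' i ≠ 0 := by omega
      have hlt' := h4' a i hab hbr hw'ne
      rw [hunot a ha', heq a hab]
      exact lt_of_le_of_lt (huw' i) hlt'
    · have hb' : b ≠ i := fun h => hb h.symm
      by_cases ha : i = a
      · subst ha
        rw [hunot b hb', hui]
        have := h3 i b (le_of_lt hab); omega
      · have ha' : a ≠ i := fun h => ha h.symm
        rw [hunot a ha', hunot b hb']
        rw [hunot b hb'] at hbne
        exact h4 a b hab hbr hbne
  · intro a b hab har hane
    by_cases ha : i = a
    · subst ha
      have hb' : b ≠ i := (ne_of_lt hab).symm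
      rw [hunot b hb', hui]
      have := h3 i b (le_of_lt hab); omega
    · have ha' : a ≠ i := fun h => ha h.symm
      rw [hunot a ha'] at hane ⊢
      by_cases hb : i = b
      · subst hb
        have hwa : w a = w' a := heq a hab
        have hlt' := h5' a i hab har (by rw [← hwa]; exact hane)
        rw [hwa]
        exact lt_of_le_of_lt (huw' i) hlt'
      · have hb' : b ≠ i := fun h => hb h.symm
        rw [hunot b hb']
        exact h5 a b hab har hane
  · intro huweq
    have : w i = u i := congrFun huweq i
    omega
  · unfold rho
    have key : ∀ j : Fin n,
        (if (j : ℕ) < r then u j else ((((j : ℕ) - r : ℕ) : ℤ) + 1 + u j))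
        = (if (j : ℕ) < r then w j else ((((j : ℕ) - r : ℕ) : ℤ) + 1 + w j))
          + (if j = i then 1 else 0) := by
      intro j
      by_cases hj : j = i
      · subst hj; rw [hui]; by_cases h : (j : ℕ) < r <;> simp [h] <;> ring
      · rw [hunot j hj]; simp [hj]
    rw [Finset.sum_congr rfl (fun j _ => key j), Finset.sum_add_distrib,
      Finset.sum_ite_eq' Finset.univ i (fun _ => (1:ℤ))]
    simp

/-- `ρ` vanishes at the minimum `0⋯0|12⋯(n-r)` and increases by
exactly `1` along covering relations; consequently `ρ` is the rank function of
the graded lattice `S(n,r)`. -/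
theorem Snr_rank_function (n r : ℕ) (hr : r ≤ n) :
    rho n r (botStr n r) = 0 ∧
    (∀ w w' : Fin n → ℤ, Admissible n r w → Admissible n r w' →
      SCovers n r w w' → rho n r w' = rho n r w + 1) := by
  constructor
  · apply Finset.sum_eq_zero
    intro j _
    by_cases h : (j : ℕ) < r <;> simp [botStr, h] <;> omega
  · rintro w w' hw hw' ⟨hlt, hnc⟩
    obtain ⟨u, hadm, hsltwu, husle, hrho⟩ := exists_step n r w w' hw hw' hlt
    by_cases huw : u = w'
    · rw [← huw]; exact hrho
    · exact absurd ⟨u, hadm, hsltwu, husle, huw⟩ hnc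
end

section
/- For every w ∈ S(n,r), ρ(w) + ρ(w^c) = R(n,r), where w^c is the complement string whose set of nonzero symbols is the complement of that of w in A(n,r) ∖ {0}, ρ is the rank function, and R(n,r) = C(r+1,2) + C(n−r+1,2). -/
open Finset

lemma gaussZ (m : ℕ) : 2 * (∑ i ∈ Finset.range m, ((i : ℤ) + 1)) = m * (m + 1) := by
  induction m with
  | zero => simp
  | succ k ih =>
    rw [Finset.sum_range_succ]
    push_cast
    linear_combination ih

lemma sumIccZ (m r : ℕ) :
    2 * (∑ a ∈ Finset.Icc (-(m : ℤ)) (r : ℤ), a) = r * (r + 1) - m * (m + 1) := by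
  induction m with
  | zero =>
    simp only [Nat.cast_zero, neg_zero]
    induction r with
    | zero => simp
    | succ k ih =>
      have hins : Finset.Icc (0 : ℤ) ((k + 1 : ℕ) : ℤ)
          = insert ((k : ℤ) + 1) (Finset.Icc (0 : ℤ) (k : ℤ)) := by
        ext a; simp only [Finset.mem_Icc, Finset.mem_insert]; push_cast; omega
      rw [hins, Finset.sum_insert (by simp)]
      push_cast
      linear_combination ih
  | succ k ih =>
    have hins : Finset.Icc (-((k + 1 : ℕ) : ℤ)) (r : ℤ)
        = insert (-((k : ℤ) + 1)) (Finset.Icc (-(k : ℤ)) (r : ℤ)) := by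
      ext a; simp only [Finset.mem_Icc, Finset.mem_insert]; push_cast; omega
    rw [hins, Finset.sum_insert (by simp only [Finset.mem_Icc]; omega)]
    push_cast
    linear_combination ih

lemma adm_eq_zero {n r : ℕ} {w : Fin n → ℤ} (hw : Admissible n r w)
    {i j : Fin n} (hij : i < j) (heq : w i = w j) : w i = 0 := by
  by_contra h0
  rcases lt_or_ge (j : ℕ) r with hjr | hjr
  · exact absurd heq (by have := hw.2.2.2.1 i j hij hjr (heq ▸ h0); omega)
  · rcases le_or_gt r (i : ℕ) with hir | hir
    · exact absurd heq (by have := hw.2.2.2.2 i j hij hir h0; omega)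
    · have h1 := (hw.1 i hir).1
      have h2 := (hw.2.1 j hjr).2
      omega

lemma sum_entries (n r : ℕ) (w : Fin n → ℤ) (hw : Admissible n r w) :
    ∑ i : Fin n, w i =
      ∑ a ∈ (Finset.Icc (-((n - r : ℕ) : ℤ)) (r : ℤ)).filter
        (fun a => a ≠ 0 ∧ ∃ i, w i = a), a := by
  rw [← Finset.sum_filter_ne_zero Finset.univ]
  refine Finset.sum_bij (fun i _ => w i) ?_ ?_ ?_ (fun _ _ => rfl)
  · intro i hi
    simp only [Finset.mem_filter, Finset.mem_univ, true_and] at hi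
    simp only [Finset.mem_filter, Finset.mem_Icc]
    refine ⟨?_, hi, ⟨i, rfl⟩⟩
    rcases lt_or_ge (i : ℕ) r with hir | hir
    · have h1 := hw.1 i hir
      constructor
      · have : (0:ℤ) ≤ ((n - r : ℕ) : ℤ) := by positivity
        omega
      · exact h1.2
    · have h1 := hw.2.1 i hir
      constructor
      · exact h1.1
      · have : (0:ℤ) ≤ (r : ℤ) := by positivity
        omega
  · intro i hi j hj hij
    simp only [Finset.mem_filter, Finset.mem_univ, true_and] at hi hj
    by_contra hne
    rcases lt_trichotomy i j with h | h | h
    · exact hi (adm_eq_zero hw h hij)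
    · exact hne h
    · exact hj (adm_eq_zero hw h hij.symm)
  · intro a ha
    simp only [Finset.mem_filter, Finset.mem_Icc] at ha
    obtain ⟨_, ha0, i, hi⟩ := ha
    exact ⟨i, by simp [Finset.mem_filter, hi, ha0], hi⟩

lemma rho_eq (n r : ℕ) (w : Fin n → ℤ) :
    rho n r w = (∑ i : Fin n, w i)
      + ∑ i : Fin n, (if (i : ℕ) < r then 0 else (((i : ℕ) - r : ℕ) : ℤ) + 1) := by
  rw [rho, ← Finset.sum_add_distrib]
  apply Finset.sum_congr rfl
  intro i _
  split <;> ring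

lemma T_val (n r : ℕ) (hr : r ≤ n) :
    2 * (∑ i : Fin n, (if (i : ℕ) < r then 0 else (((i : ℕ) - r : ℕ) : ℤ) + 1))
      = ((n - r : ℕ) : ℤ) * ((n - r : ℕ) : ℤ) + ((n - r : ℕ) : ℤ) := by
  rw [Fin.sum_univ_eq_sum_range
    (fun i => if i < r then (0:ℤ) else ((i - r : ℕ) : ℤ) + 1) n]
  rw [← Finset.sum_range_add_sum_Ico _ hr]
  have h1 : ∑ i ∈ Finset.range r, (if i < r then (0:ℤ) else ((i - r : ℕ) : ℤ) + 1) = 0 := by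
    apply Finset.sum_eq_zero
    intro i hi
    simp [Finset.mem_range.mp hi]
  rw [h1, zero_add, Finset.sum_Ico_eq_sum_range]
  have h2 : ∀ i ∈ Finset.range (n - r),
      (if r + i < r then (0:ℤ) else ((r + i - r : ℕ) : ℤ) + 1) = (i : ℤ) + 1 := by
    intro i _
    simp [Nat.add_sub_cancel_left]
  rw [Finset.sum_congr rfl h2, gaussZ]
  ring

/-- for every `w ∈ S(n,r)`, `ρ(w) + ρ(w^c) = R(n,r)`. -/
theorem Snr_rank_compl (n r : ℕ) (hr : r ≤ n) (w wc : Fin n → ℤ)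
    (hw : Admissible n r w) (hwc : Admissible n r wc)
    (hc : ComplOf n r w wc) :
    rho n r w + rho n r wc = (Rnk n r : ℤ) := by
  have hW : (Finset.Icc (-((n - r : ℕ) : ℤ)) (r : ℤ)).filter
        (fun a => a ≠ 0 ∧ ∃ i, w i = a)
      = ((Finset.Icc (-((n - r : ℕ) : ℤ)) (r : ℤ)).filter (fun a => a ≠ 0)).filter
        (fun a => ∃ i, w i = a) := by
    rw [Finset.filter_filter]
  have hWc : (Finset.Icc (-((n - r : ℕ) : ℤ)) (r : ℤ)).filter
        (fun a => a ≠ 0 ∧ ∃ i, wc i = a)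
      = ((Finset.Icc (-((n - r : ℕ) : ℤ)) (r : ℤ)).filter (fun a => a ≠ 0)).filter
        (fun a => ¬ ∃ i, w i = a) := by
    rw [Finset.filter_filter]
    apply Finset.filter_congr
    intro a haI
    rw [Finset.mem_Icc] at haI
    constructor
    · rintro ⟨ha0, hex⟩
      exact ⟨ha0, ((hc a ha0).mp hex).2.2⟩
    · rintro ⟨ha0, hnex⟩
      exact ⟨ha0, (hc a ha0).mpr ⟨haI.1, haI.2, hnex⟩⟩
  have hpart : (∑ a ∈ (Finset.Icc (-((n - r : ℕ) : ℤ)) (r : ℤ)).filter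
        (fun a => a ≠ 0 ∧ ∃ i, w i = a), a)
      + (∑ a ∈ (Finset.Icc (-((n - r : ℕ) : ℤ)) (r : ℤ)).filter
        (fun a => a ≠ 0 ∧ ∃ i, wc i = a), a)
      = ∑ a ∈ (Finset.Icc (-((n - r : ℕ) : ℤ)) (r : ℤ)).filter (fun a => a ≠ 0), a := by
    rw [hW, hWc]
    exact Finset.sum_filter_add_sum_filter_not _ _ _
  have hs0I : (∑ a ∈ (Finset.Icc (-((n - r : ℕ) : ℤ)) (r : ℤ)).filter (fun a => a ≠ 0), a)
      = ∑ a ∈ Finset.Icc (-((n - r : ℕ) : ℤ)) (r : ℤ), a := by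
    rw [← Finset.sum_filter_add_sum_filter_not
      (Finset.Icc (-((n - r : ℕ) : ℤ)) (r : ℤ)) (fun a => a ≠ 0) (fun a => a)]
    have h0 : (∑ a ∈ (Finset.Icc (-((n - r : ℕ) : ℤ)) (r : ℤ)).filter
        (fun a => ¬ a ≠ 0), a) = 0 := by
      apply Finset.sum_eq_zero
      intro a ha
      simp only [Finset.mem_filter, not_not] at ha
      exact ha.2
    rw [h0, add_zero]
  have hsum := sumIccZ (n - r) r
  have hT := T_val n r hr
  have hRw := rho_eq n r w
  have hRwc := rho_eq n r wc
  have hEw := sum_entries n r w hw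
  have hEwc := sum_entries n r wc hwc
  have hRnkN : 2 * Rnk n r = r * (r + 1) + (n - r) * ((n - r) + 1) := by
    have e1 : 2 * (r * (r + 1) / 2) = r * (r + 1) :=
      Nat.two_mul_div_two_of_even (Nat.even_mul_succ_self r)
    have e2 : 2 * ((n - r) * ((n - r) + 1) / 2) = (n - r) * ((n - r) + 1) :=
      Nat.two_mul_div_two_of_even (Nat.even_mul_succ_self (n - r))
    rw [Rnk, Nat.mul_add, e1, e2]
  have hRnk : 2 * ((Rnk n r : ℕ) : ℤ)
      = (r : ℤ) * ((r : ℤ) + 1) + ((n - r : ℕ) : ℤ) * (((n - r : ℕ) : ℤ) + 1) := by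
    exact_mod_cast hRnkN
  linarith
end

section
/- For n ≥ 1 and 0 ≤ r < n, S(n,r) is the disjoint union of two sublattices S_1(n,r) and S_2(n,r), each isomorphic to S(n−1,r): S_1(n,r) consists of the strings whose last symbol is n-r̄, and S_2(n,r) consists of the strings whose first symbol after the bar is 0. -/
open Finset

/-- Membership in `S_1(n,r)`: the last symbol is `(n-r)‾`. -/
def memS1 (n r : ℕ) (hn : 0 < n) (w : Fin n → ℤ) : Prop :=
  w ⟨n - 1, by omega⟩ = -((n - r : ℕ) : ℤ)

/-- Membership in `S_2(n,r)`: the first symbol after the bar is `0` (and the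
symbol `(n-r)‾` does not occur, i.e. the negative symbols lie in the smaller
alphabet `{0, 1̄, …, (n-r-1)‾}`). -/
def memS2 (n r : ℕ) (hr : r < n) (w : Fin n → ℤ) : Prop :=
  w ⟨r, hr⟩ = 0 ∧ ∀ i : Fin n, w i ≠ -((n - r : ℕ) : ℤ)

/-- Deleting the last symbol. -/
def drop1 (n : ℕ) (w : Fin n → ℤ) : Fin (n - 1) → ℤ :=
  fun i => w ⟨(i : ℕ), by have := i.isLt; omega⟩

/-- Deleting the first symbol after the bar (position `r`). -/
def drop2 (n r : ℕ) (w : Fin n → ℤ) : Fin (n - 1) → ℤ :=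
  fun i => if h : (i : ℕ) < r then w ⟨(i : ℕ), by have := i.isLt; omega⟩
           else w ⟨(i : ℕ) + 1, by have := i.isLt; omega⟩


/-!
Both halves are fibres of the deletion of one position `p` of a string: the last position for
`S₁(n,r)`, where the symbol is `n-r̄`, and position `r` for `S₂(n,r)`, where it is `0`. Deleting
`p` restricts a string along the order embedding `Fin.succAbove p`, which respects the bar, so it
preserves admissibility as soon as the remaining symbols avoid `n-r̄`; conversely `Fin.insertNth`
puts the symbol back, and the componentwise order splits off coordinate `p`. Every string lies in
one of the halves because the nonzero barred symbols strictly decrease: if `j₁ ≠ 0` then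
`j_k ≤ k̄` for all `k`, whence `j_{n-r} = n-r̄`.
-/

theorem Fin.val_succAbove_lt_iff_of_le {m r : ℕ} {p : Fin (m + 1)} (hp : r ≤ (p : ℕ))
    (i : Fin m) : (p.succAbove i : ℕ) < r ↔ (i : ℕ) < r := by
  rcases lt_or_ge i.castSucc p with h | h
  · rw [Fin.succAbove_of_castSucc_lt _ _ h, val_castSucc]
  · rw [Fin.succAbove_of_le_castSucc _ _ h, val_succ]
    rw [Fin.le_iff_val_le_val, val_castSucc] at h
    omega

theorem sle_iff_sle_removeNth {m : ℕ} {w w' : Fin (m + 1) → ℤ} (p : Fin (m + 1))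
    (h : w p = w' p) : sle w w' ↔ sle (p.removeNth w) (p.removeNth w') := by
  simp only [sle, Fin.forall_iff_succAbove p, h, le_refl, true_and, Fin.removeNth]

namespace Admissible

section

variable {n r : ℕ} {w : Fin n → ℤ}

theorem comp_of_strictMono {m : ℕ} (hw : Admissible n r w) {e : Fin m → Fin n}
    (he : StrictMono e) (he_lt : ∀ i, (e i : ℕ) < r ↔ (i : ℕ) < r)
    (hlow : ∀ i : Fin m, r ≤ (i : ℕ) → -((m - r : ℕ) : ℤ) ≤ w (e i)) :
    Admissible m r (w ∘ e) := by
  obtain ⟨hpos, hneg, hmono, hposStrict, hnegStrict⟩ := hw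
  have he_ge (i : Fin m) (hi : r ≤ (i : ℕ)) : r ≤ (e i : ℕ) :=
    not_lt.1 fun h => absurd ((he_lt i).1 h) (not_lt.2 hi)
  exact ⟨fun i hi => hpos _ ((he_lt i).2 hi),
    fun i hi => ⟨hlow i hi, (hneg _ (he_ge i hi)).2⟩,
    fun i j hij => hmono _ _ (he.monotone hij),
    fun i j hij hj => hposStrict _ _ (he hij) ((he_lt j).2 hj),
    fun i j hij hi => hnegStrict _ _ (he hij) (he_ge i hi)⟩

theorem neg_le_apply (hw : Admissible n r w) (i : Fin n) : -((n - r : ℕ) : ℤ) ≤ w i := by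
  rcases lt_or_ge (i : ℕ) r with hi | hi
  · have := (hw.1 i hi).1
    omega
  · exact (hw.2.1 i hi).1

theorem apply_le_of_ne_zero (hw : Admissible n r w) (hr : r < n) (h0 : w ⟨r, hr⟩ ≠ 0)
    (i : Fin n) (hi : r ≤ (i : ℕ)) : w i ≤ -(((i : ℕ) - r : ℕ) : ℤ) - 1 := by
  obtain ⟨k, hk⟩ : ∃ k, (i : ℕ) = r + k := ⟨i - r, by omega⟩
  induction k generalizing i with
  | zero =>
    obtain rfl : i = ⟨r, hr⟩ := Fin.ext (by omega)
    have := (hw.2.1 _ hi).2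
    omega
  | succ k ih =>
    have hprev : r + k < n := by omega
    have hle := ih ⟨r + k, hprev⟩ (Nat.le_add_right r k) rfl
    simp only [Nat.add_sub_cancel_left] at hle
    have hlt := hw.2.2.2.2 ⟨r + k, hprev⟩ i (Fin.lt_def.2 (show r + k < (i : ℕ) by omega))
      (Nat.le_add_right r k) (by omega)
    omega

theorem memS2_of_not_memS1 (hw : Admissible n r w) (hr : r < n)
    (h : ¬ memS1 n r (by omega) w) : memS2 n r hr w := by
  unfold memS1 at h
  have hlast := hw.neg_le_apply ⟨n - 1, by omega⟩
  refine ⟨by_contra fun h0 => h ?_, fun i hi => h ?_⟩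
  · have := hw.apply_le_of_ne_zero hr h0 ⟨n - 1, by omega⟩ (show r ≤ n - 1 by omega)
    dsimp only at this
    omega
  · have := hw.2.2.1 i ⟨n - 1, by omega⟩ (Fin.le_def.2 (show (i : ℕ) ≤ n - 1 by omega))
    omega

theorem apply_ne_of_memS1 (hw : Admissible n r w) (hr : r < n) (h : memS1 n r (by omega) w)
    (i : Fin n) (hi : (i : ℕ) < n - 1) : w i ≠ -((n - r : ℕ) : ℤ) := by
  intro heq
  unfold memS1 at h
  have hir : r ≤ (i : ℕ) := by
    by_contra hir
    have := (hw.1 i (by omega)).1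
    omega
  have := hw.2.2.2.2 i ⟨n - 1, by omega⟩ (Fin.lt_def.2 (show (i : ℕ) < n - 1 from hi)) hir
    (by omega)
  omega

end

section

variable {m r : ℕ}

theorem removeNth {w : Fin (m + 1) → ℤ} (hw : Admissible (m + 1) r w) {p : Fin (m + 1)}
    (hp : r ≤ (p : ℕ)) (hne : ∀ i, w (p.succAbove i) ≠ -((m + 1 - r : ℕ) : ℤ)) :
    Admissible m r (p.removeNth w) :=
  hw.comp_of_strictMono (Fin.strictMono_succAbove p) (Fin.val_succAbove_lt_iff_of_le hp)
    fun i _ => by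
      have := hw.neg_le_apply (p.succAbove i)
      have := hne i
      omega

theorem insertNth {u : Fin m → ℤ} (hu : Admissible m r u) {p : Fin (m + 1)}
    (hp : r ≤ (p : ℕ)) {c : ℤ} (hc : -((m + 1 - r : ℕ) : ℤ) ≤ c ∧ c ≤ 0)
    (hbefore : ∀ k : Fin m, k.castSucc < p → c ≤ u k ∧ (r ≤ (k : ℕ) → u k ≠ 0 → c < u k))
    (hafter : ∀ k : Fin m, p ≤ k.castSucc → u k ≤ c ∧ (c ≠ 0 → u k < c)) :
    Admissible (m + 1) r (p.insertNth c u) := by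
  obtain ⟨hpos, hneg, hmono, hposStrict, hnegStrict⟩ := hu
  have hlt := Fin.val_succAbove_lt_iff_of_le hp
  have hge (k : Fin m) : r ≤ (p.succAbove k : ℕ) ↔ r ≤ (k : ℕ) := by
    simpa only [not_lt] using (hlt k).not
  have hafter' (k : Fin m) (h : p ≤ p.succAbove k) : p ≤ k.castSucc :=
    (Fin.lt_succAbove_iff_le_castSucc p k).1 (h.lt_of_ne (p.succAbove_ne k).symm)
  have hbefore' (k : Fin m) (h : p.succAbove k ≤ p) : k.castSucc < p :=
    (Fin.succAbove_lt_iff_castSucc_lt p k).1 (h.lt_of_ne (p.succAbove_ne k))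
  refine ⟨?_, ?_, ?_, ?_, ?_⟩ <;>
    simp only [Fin.forall_iff_succAbove p, Fin.insertNth_apply_same, Fin.insertNth_apply_succAbove,
      Fin.succAbove_le_succAbove_iff, Fin.succAbove_lt_succAbove_iff, le_refl, lt_self_iff_false,
      hlt, hge, implies_true, false_implies, true_and]
  · exact ⟨fun h => absurd h (not_lt.2 hp), hpos⟩
  · exact ⟨fun _ => hc, fun k hk => ⟨by have := (hneg k hk).1; omega, (hneg k hk).2⟩⟩
  · exact ⟨fun k h => (hafter k (hafter' k h)).1,
      fun k => ⟨fun h => (hbefore k (hbefore' k h)).1, hmono k⟩⟩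
  · refine ⟨fun k h hk => ?_, fun k => ⟨fun _ h => absurd h (not_lt.2 hp), hposStrict k⟩⟩
    have := (hlt k).2 hk
    rw [Fin.lt_def] at h
    omega
  · exact ⟨fun k h _ hc0 => (hafter k (hafter' k h.le)).2 hc0,
      fun k => ⟨fun h hk => (hbefore k (hbefore' k h.le)).2 hk, hnegStrict k⟩⟩

theorem insertNth_last {u : Fin m → ℤ} (hu : Admissible m r u) (hr : r < m + 1) :
    Admissible (m + 1) r ((Fin.last m).insertNth (-((m + 1 - r : ℕ) : ℤ)) u) := by
  refine hu.insertNth (by rw [Fin.val_last]; omega) (by omega) (fun k _ => ?_) (fun k hk => ?_)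
  · have := hu.neg_le_apply k
    constructor <;> omega
  · exact absurd hk (not_le.2 (Fin.castSucc_lt_last k))

theorem insertNth_zero {u : Fin m → ℤ} (hu : Admissible m r u) (hr : r < m + 1) :
    Admissible (m + 1) r ((⟨r, hr⟩ : Fin (m + 1)).insertNth 0 u) := by
  refine hu.insertNth le_rfl (by omega) (fun k hk => ?_) (fun k hk => ?_)
  · rw [Fin.lt_def] at hk
    exact ⟨(hu.1 k hk).1, fun h => absurd h (not_le.2 hk)⟩
  · rw [Fin.le_def] at hk
    exact ⟨(hu.2.1 k hk).2, fun h => absurd rfl h⟩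

theorem memS2_insertNth_zero {u : Fin m → ℤ} (hu : Admissible m r u) (hr : r < m + 1) :
    memS2 (m + 1) r hr ((⟨r, hr⟩ : Fin (m + 1)).insertNth 0 u) := by
  refine ⟨Fin.insertNth_apply_same _ _ _, (Fin.forall_iff_succAbove ⟨r, hr⟩).2 ⟨?_, fun k => ?_⟩⟩
  · rw [Fin.insertNth_apply_same]
    omega
  · rw [Fin.insertNth_apply_succAbove]
    have := hu.neg_le_apply k
    omega

end

end Admissible

theorem drop1_succ {m : ℕ} (w : Fin (m + 1) → ℤ) : drop1 (m + 1) w = (Fin.last m).removeNth w := by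
  funext i
  simp only [drop1, Fin.removeNth, Fin.succAbove_last]
  rfl

theorem drop2_succ {m r : ℕ} (hr : r < m + 1) (w : Fin (m + 1) → ℤ) :
    drop2 (m + 1) r w = (⟨r, hr⟩ : Fin (m + 1)).removeNth w := by
  funext i
  rcases lt_or_ge (i : ℕ) r with hi | hi
  · rw [Fin.removeNth, Fin.succAbove_of_castSucc_lt ⟨r, hr⟩ i (Fin.lt_def.2 hi)]
    simp only [drop2, dif_pos hi]
    rfl
  · rw [Fin.removeNth, Fin.succAbove_of_le_castSucc ⟨r, hr⟩ i (Fin.le_def.2 hi)]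
    simp only [drop2, dif_neg (not_lt.2 hi)]
    rfl

/-- for `n ≥ 1` and `0 ≤ r < n`, `S(n,r)` is the disjoint union
of the two sublattices `S_1(n,r)` and `S_2(n,r)`, each isomorphic to
`S(n-1,r)` (via deletion of the last symbol, resp. of the symbol at position
`r`, both order isomorphisms onto `S(n-1,r)`). -/
theorem Snr_decomposition (n r : ℕ) (hn : 1 ≤ n) (hr : r < n) :
    (∀ w : Fin n → ℤ, Admissible n r w →
      (memS1 n r (by omega) w ∨ memS2 n r hr w) ∧
      ¬(memS1 n r (by omega) w ∧ memS2 n r hr w)) ∧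
    (∀ w : Fin n → ℤ, Admissible n r w → memS1 n r (by omega) w →
      Admissible (n - 1) r (drop1 n w)) ∧
    (∀ w : Fin n → ℤ, Admissible n r w → memS2 n r hr w →
      Admissible (n - 1) r (drop2 n r w)) ∧
    (∀ u : Fin (n - 1) → ℤ, Admissible (n - 1) r u →
      ∃! w : Fin n → ℤ, Admissible n r w ∧ memS1 n r (by omega) w ∧
        drop1 n w = u) ∧
    (∀ u : Fin (n - 1) → ℤ, Admissible (n - 1) r u →
      ∃! w : Fin n → ℤ, Admissible n r w ∧ memS2 n r hr w ∧
        drop2 n r w = u) ∧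
    (∀ w w' : Fin n → ℤ, Admissible n r w → Admissible n r w' →
      memS1 n r (by omega) w → memS1 n r (by omega) w' →
      (sle w w' ↔ sle (drop1 n w) (drop1 n w'))) ∧
    (∀ w w' : Fin n → ℤ, Admissible n r w → Admissible n r w' →
      memS2 n r hr w → memS2 n r hr w' →
      (sle w w' ↔ sle (drop2 n r w) (drop2 n r w'))) := by
  obtain ⟨m, rfl⟩ : ∃ m, n = m + 1 := ⟨n - 1, by omega⟩
  simp only [drop1_succ, drop2_succ hr]
  refine ⟨fun w hw => ⟨or_iff_not_imp_left.2 (hw.memS2_of_not_memS1 hr),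
      fun ⟨h₁, h₂⟩ => h₂.2 _ h₁⟩, ?_, ?_, ?_, ?_, ?_, ?_⟩
  · intro w hw h
    exact hw.removeNth (by rw [Fin.val_last]; omega) fun i =>
      hw.apply_ne_of_memS1 hr h _ (by simp)
  · intro w hw h
    exact hw.removeNth le_rfl fun i => h.2 _
  · intro u hu
    exact ⟨_, ⟨hu.insertNth_last hr, Fin.insertNth_apply_same (α := fun _ => ℤ) _ _ _, by simp⟩,
      fun w ⟨_, h, hwu⟩ => Fin.eq_insertNth_iff.2 ⟨h, hwu⟩⟩
  · intro u hu
    exact ⟨_, ⟨hu.insertNth_zero hr, hu.memS2_insertNth_zero hr, by simp⟩,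
      fun w ⟨_, h, hwu⟩ => Fin.eq_insertNth_iff.2 ⟨h.1, hwu⟩⟩
  · intro w w' _ _ h h'
    exact sle_iff_sle_removeNth _ (h.trans h'.symm)
  · intro w w' _ _ h h'
    exact sle_iff_sle_removeNth _ (h.1.trans h'.1.symm)
end

section
/- For 0 ≤ r ≤ n and 0 ≤ k ≤ R(n,r), the rank numbers satisfy the Cauchy-type convolution formula s(n,r,k) = Σ_{i=0}^{k} s(r,r,i) · s(n−r,n−r,k−i). -/
open Finset

/-!
A string of `S(r + m, r)` is a strictly decreasing word of tilded symbols padded with zeros,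
followed by zeros and a strictly decreasing word of barred symbols. Each half is determined by
its set of nonzero symbols, so the strings correspond to pairs of subsets `A ⊆ [1, r]`,
`B ⊆ [1, m]`; letting `B` record the barred symbols that do *not* occur makes the rank
`∑ A + ∑ B`. Hence `s(r + m, r, k)` counts the pairs with `∑ A + ∑ B = k`, a convolution of the
subset-sum counts of `[1, r]` and `[1, m]`, and the case `m = 0` identifies those counts with
`s(r, r, ·)`.
-/

/-- A strictly decreasing word in `[1, c]` followed by zeros. Both halves of a string of `S(n, r)`
have this shape, the barred one after reversal and negation. -/
def IsDescStr (c : ℕ) (u : Fin c → ℤ) : Prop :=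
  (∀ i, 0 ≤ u i ∧ u i ≤ c) ∧ ∀ i j, i < j → u j ≠ 0 → u j < u i

def nonzeroValues {c : ℕ} (u : Fin c → ℤ) : Finset ℕ :=
  ({i | u i ≠ 0} : Finset (Fin c)).image fun i => (u i).toNat

theorem toNat_mem_nonzeroValues {c : ℕ} {u : Fin c → ℤ} {i : Fin c} (hi : u i ≠ 0) :
    (u i).toNat ∈ nonzeroValues u :=
  mem_image_of_mem _ (by simpa using hi)

-- the `i`-th largest element of `A`, then zeros
noncomputable def descStr (c : ℕ) (A : Finset ℕ) : Fin c → ℤ := fun i =>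
  if h : (i : ℕ) < #A then (A.orderEmbOfFin rfl ⟨#A - 1 - i, by omega⟩ : ℤ) else 0

namespace IsDescStr

variable {c : ℕ} {u v : Fin c → ℤ}

theorem antitone (hu : IsDescStr c u) : Antitone u := by
  intro i j hij
  rcases hij.lt_or_eq with hij | rfl
  · by_cases hj : u j = 0
    · exact hj ▸ (hu.1 i).1
    · exact (hu.2 i j hij hj).le
  · rfl

theorem nonzeroValues_subset (hu : IsDescStr c u) : nonzeroValues u ⊆ Icc 1 c := by
  intro a ha
  obtain ⟨i, hi, rfl⟩ := mem_image.1 ha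
  have := hu.1 i
  simp only [mem_filter, mem_univ, true_and] at hi
  simp only [mem_Icc]
  omega

theorem sum_eq (hu : IsDescStr c u) : ∑ i, u i = ((∑ a ∈ nonzeroValues u, a : ℕ) : ℤ) := by
  have hinj : Set.InjOn (fun i => (u i).toNat) ({i | u i ≠ 0} : Finset (Fin c)) := by
    intro i hi j hj hij
    simp only [coe_filter, mem_univ, true_and, Set.mem_ofPred_eq] at hi hj
    have := (hu.1 i).1; have := (hu.1 j).1
    by_contra hne
    rcases lt_or_gt_of_ne hne with h | h
    · have := hu.2 i j h hj; simp only at hij; omega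
    · have := hu.2 j i h hi; simp only at hij; omega
  rw [nonzeroValues, sum_image hinj, ← sum_filter_ne_zero, Nat.cast_sum]
  refine sum_congr rfl fun i _ => ?_
  have := (hu.1 i).1
  omega

theorem le_of_eqOn_lt (hu : IsDescStr c u) (hv : IsDescStr c v)
    (hsub : nonzeroValues u ⊆ nonzeroValues v) (i : Fin c) (heq : ∀ j < i, u j = v j) :
    u i ≤ v i := by
  -- otherwise `u i = v j` for some `j`, and neither `j < i` nor `i < j` is possible
  by_contra! hlt
  have hui : u i ≠ 0 := by have := (hv.1 i).1; omega
  obtain ⟨j, hj, hji⟩ := mem_image.1 (hsub (toNat_mem_nonzeroValues hui))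
  simp only [mem_filter, mem_univ, true_and] at hj
  have hvj : v j = u i := by have := (hv.1 j).1; have := (hu.1 i).1; omega
  rcases lt_trichotomy j i with h | rfl | h
  · have := hu.2 j i h hui; rw [heq j h] at this; omega
  · omega
  · have := hv.2 i j h hj; omega

theorem eq_of_nonzeroValues_eq (hu : IsDescStr c u) (hv : IsDescStr c v)
    (h : nonzeroValues u = nonzeroValues v) : u = v := by
  funext i
  induction i using WellFoundedLT.induction with
  | ind i ih =>
    exact le_antisymm (hu.le_of_eqOn_lt hv h.le i ih)
      (hv.le_of_eqOn_lt hu h.ge i fun j hj => (ih j hj).symm)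

end IsDescStr

section descStr

variable {c : ℕ} {A : Finset ℕ}

theorem descStr_of_lt {i : Fin c} (h : (i : ℕ) < #A) :
    descStr c A i = (A.orderEmbOfFin rfl ⟨#A - 1 - i, by omega⟩ : ℤ) :=
  dif_pos h

theorem descStr_of_le {i : Fin c} (h : #A ≤ i) : descStr c A i = 0 :=
  dif_neg (by omega)

theorem isDescStr_descStr (hA : A ⊆ Icc 1 c) : IsDescStr c (descStr c A) := by
  refine ⟨fun i => ?_, fun i j hij hj => ?_⟩
  · by_cases hi : (i : ℕ) < #A
    · have := mem_Icc.1 (hA (orderEmbOfFin_mem A rfl ⟨#A - 1 - i, by omega⟩))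
      rw [descStr_of_lt hi]
      omega
    · simp [descStr_of_le (not_lt.1 hi)]
  · have hjA : (j : ℕ) < #A := by
      by_contra h
      exact hj (descStr_of_le (not_lt.1 h))
    have hij' : (i : ℕ) < j := hij
    rw [descStr_of_lt hjA, descStr_of_lt (hij'.trans hjA), Nat.cast_lt]
    exact (A.orderEmbOfFin rfl).strictMono (Fin.mk_lt_mk.2 (by omega))

theorem nonzeroValues_descStr (hA : A ⊆ Icc 1 c) : nonzeroValues (descStr c A) = A := by
  ext a
  simp only [nonzeroValues, mem_image, mem_filter, mem_univ, true_and]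
  constructor
  · rintro ⟨i, hi, rfl⟩
    have hiA : (i : ℕ) < #A := by
      by_contra h
      exact hi (descStr_of_le (not_lt.1 h))
    simp [descStr_of_lt hiA]
  · intro ha
    obtain ⟨x, hx⟩ : a ∈ Set.range (A.orderEmbOfFin rfl) := by simpa using ha
    have hAc : #A ≤ c := by simpa using card_le_card hA
    have hxi : (⟨#A - 1 - (#A - 1 - x), by omega⟩ : Fin #A) = x := Fin.ext (by simp; omega)
    have ha1 := (mem_Icc.1 (hA ha)).1
    refine ⟨⟨#A - 1 - x, by omega⟩, ?_⟩
    rw [descStr_of_lt (by simp; omega)]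
    simp only [hxi, hx]
    omega

theorem descStr_injOn {B : Finset ℕ} (hA : A ⊆ Icc 1 c) (hB : B ⊆ Icc 1 c)
    (h : descStr c A = descStr c B) : A = B := by
  rw [← nonzeroValues_descStr hA, h, nonzeroValues_descStr hB]

theorem IsDescStr.descStr_nonzeroValues {u : Fin c → ℤ} (hu : IsDescStr c u) :
    descStr c (nonzeroValues u) = u :=
  (isDescStr_descStr hu.nonzeroValues_subset).eq_of_nonzeroValues_eq hu
    (nonzeroValues_descStr hu.nonzeroValues_subset)

theorem sum_descStr (hA : A ⊆ Icc 1 c) : ∑ i, descStr c A i = ((∑ a ∈ A, a : ℕ) : ℤ) := by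
  rw [(isDescStr_descStr hA).sum_eq, nonzeroValues_descStr hA]

end descStr

theorem Fin.antitone_append {α : Type*} [Preorder α] {r m : ℕ} {u : Fin r → α} {v : Fin m → α}
    (hu : Antitone u) (hv : Antitone v) (huv : ∀ i j, v j ≤ u i) : Antitone (Fin.append u v) := by
  intro i j hij
  induction j using Fin.addCases with
  | left j =>
    induction i using Fin.addCases with
    | left i => simpa using hu (by simpa only [Fin.le_def, Fin.val_castAdd] using hij)
    | right i => simp only [Fin.le_def, Fin.val_castAdd, Fin.val_natAdd] at hij; omega
  | right j =>
    induction i using Fin.addCases with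
    | left i => simpa using huv i j
    | right i =>
      simpa using hv (show i ≤ j by simp only [Fin.le_def, Fin.val_natAdd] at hij ⊢; omega)

section append

variable {r m : ℕ} {u : Fin r → ℤ} {v : Fin m → ℤ}

theorem isDescStr_of_admissible_append
    (h : Admissible (r + m) r (Fin.append u fun j => -v j.rev)) :
    IsDescStr r u ∧ IsDescStr m v := by
  obtain ⟨hpos, hneg, -, hpos_strict, hneg_strict⟩ := h
  refine ⟨⟨fun i => ?_, fun i j hij hj => ?_⟩, ⟨fun i => ?_, fun i j hij hj => ?_⟩⟩
  · simpa using hpos (Fin.castAdd m i) (by simp)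
  · have := hpos_strict (Fin.castAdd m i) (Fin.castAdd m j)
      (by simpa only [Fin.lt_def, Fin.val_castAdd] using hij) (by simp) (by simpa using hj)
    simpa using this
  · have := hneg (Fin.natAdd r i.rev) (by simp)
    simp only [Fin.append_right, Fin.rev_rev, Nat.add_sub_cancel_left] at this
    omega
  · have := hneg_strict (Fin.natAdd r j.rev) (Fin.natAdd r i.rev)
      (by simp only [Fin.lt_def, Fin.val_natAdd, Fin.val_rev] at hij ⊢; omega) (by simp)
      (by simpa using hj)
    simp only [Fin.append_right, Fin.rev_rev] at this
    omega

theorem admissible_append (hu : IsDescStr r u) (hv : IsDescStr m v) :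
    Admissible (r + m) r (Fin.append u fun j => -v j.rev) := by
  have hu0 (i : Fin r) : 0 ≤ u i := (hu.1 i).1
  have hv0 (j : Fin m) : 0 ≤ v j := (hv.1 j).1
  refine ⟨fun i hi => ?_, fun i hi => ?_, fun i j hij => ?_, fun i j hij hj hj0 => ?_,
    fun i j hij hi hi0 => ?_⟩
  · induction i using Fin.addCases with
    | left i => simpa using hu.1 i
    | right i => simp at hi
  · induction i using Fin.addCases with
    | left i => simp at hi; omega
    | right i =>
      have := hv.1 i.rev
      simp only [Fin.append_right, Nat.add_sub_cancel_left]
      omega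
  · exact Fin.antitone_append hu.antitone
      (fun i j hij => neg_le_neg (hv.antitone (Fin.rev_le_rev.2 hij)))
      (fun i j => by have := hu0 i; have := hv0 j.rev; omega) hij
  · induction j using Fin.addCases with
    | left j =>
      induction i using Fin.addCases with
      | left i =>
        simpa using hu.2 i j (by simpa only [Fin.lt_def, Fin.val_castAdd] using hij)
          (by simpa using hj0)
      | right i => simp only [Fin.lt_def, Fin.val_castAdd, Fin.val_natAdd] at hij; omega
    | right j => simp at hj
  · induction i using Fin.addCases with
    | left i => simp at hi; omega
    | right i =>
      induction j using Fin.addCases with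
      | left j => simp only [Fin.lt_def, Fin.val_castAdd, Fin.val_natAdd] at hij; omega
      | right j =>
        have := hv.2 j.rev i.rev (Fin.rev_lt_rev.2
          (by simp only [Fin.lt_def, Fin.val_natAdd] at hij ⊢; omega)) (by simpa using hi0)
        simp; omega

end append

theorem rho_append {r m : ℕ} (u : Fin r → ℤ) (v : Fin m → ℤ) :
    rho (r + m) r (Fin.append u fun j => -v j.rev) =
      ∑ i, u i + ∑ j : Fin m, ((j : ℤ) + 1) - ∑ j, v j := by
  rw [rho, Fin.sum_univ_add]
  simp only [Fin.val_castAdd, Fin.is_lt, if_true, Fin.append_left, Fin.val_natAdd,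
    add_lt_iff_neg_left, not_lt_zero, if_false, Nat.add_sub_cancel_left, Fin.append_right]
  rw [← Equiv.sum_comp Fin.revPerm v]
  simp only [Fin.revPerm_apply, ← sub_eq_add_neg, sum_sub_distrib]
  ring

theorem sum_fin_add_one_eq_sum_Icc (m : ℕ) :
    ∑ j : Fin m, ((j : ℤ) + 1) = ((∑ a ∈ Icc 1 m, a : ℕ) : ℤ) := by
  rw [Fin.sum_univ_eq_sum_range (fun j => (j : ℤ) + 1), ← Ico_add_one_right_eq_Icc,
    sum_Ico_eq_sum_range]
  push_cast
  simp [add_comm]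

/-- The barred part records the complement `[1, m] \ B` of `B`, which turns its rank
contribution `∑ (j + 1) - ∑ ([1, m] \ B)` into `∑ B`. -/
noncomputable def stringOfSubsets (r m : ℕ) (p : Finset ℕ × Finset ℕ) : Fin (r + m) → ℤ :=
  Fin.append (descStr r p.1) fun j => -descStr m (Icc 1 m \ p.2) j.rev

section stringOfSubsets

variable {r m : ℕ}

theorem admissible_stringOfSubsets {p : Finset ℕ × Finset ℕ} (hA : p.1 ⊆ Icc 1 r) :
    Admissible (r + m) r (stringOfSubsets r m p) :=
  admissible_append (isDescStr_descStr hA) (isDescStr_descStr sdiff_subset)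

theorem rho_stringOfSubsets {p : Finset ℕ × Finset ℕ} (hA : p.1 ⊆ Icc 1 r) (hB : p.2 ⊆ Icc 1 m) :
    rho (r + m) r (stringOfSubsets r m p) = ((∑ a ∈ p.1, a + ∑ b ∈ p.2, b : ℕ) : ℤ) := by
  rw [stringOfSubsets, rho_append, sum_descStr hA, sum_descStr sdiff_subset,
    sum_fin_add_one_eq_sum_Icc, ← sum_sdiff hB]
  push_cast
  ring

theorem Admissible.exists_stringOfSubsets {w : Fin (r + m) → ℤ} (hw : Admissible (r + m) r w) :
    ∃ p ∈ (Icc 1 r).powerset ×ˢ (Icc 1 m).powerset, stringOfSubsets r m p = w := by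
  set u : Fin r → ℤ := fun i => w (Fin.castAdd m i)
  set v : Fin m → ℤ := fun j => -w (Fin.natAdd r j.rev)
  have hw_eq : (Fin.append u fun j => -v j.rev) = w := by
    simpa [u, v] using Fin.append_castAdd_natAdd
  rw [← hw_eq] at hw ⊢
  obtain ⟨hu, hv⟩ := isDescStr_of_admissible_append hw
  refine ⟨(nonzeroValues u, Icc 1 m \ nonzeroValues v), ?_, ?_⟩
  · simpa using hu.nonzeroValues_subset
  · rw [stringOfSubsets, _root_.sdiff_sdiff_eq_self hv.nonzeroValues_subset,
      hu.descStr_nonzeroValues, hv.descStr_nonzeroValues]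

theorem injOn_stringOfSubsets :
    Set.InjOn (stringOfSubsets r m) ↑((Icc 1 r).powerset ×ˢ (Icc 1 m).powerset) := by
  rintro ⟨A, B⟩ hp ⟨A', B'⟩ hq h
  simp only [coe_product, Set.mem_prod, mem_coe, mem_powerset] at hp hq
  have hleft : descStr r A = descStr r A' := funext fun i => by
    simpa [stringOfSubsets] using congrFun h (Fin.castAdd m i)
  have hright : descStr m (Icc 1 m \ B) = descStr m (Icc 1 m \ B') := funext fun j => by
    simpa [stringOfSubsets] using congrFun h (Fin.natAdd r j.rev)
  rw [descStr_injOn hp.1 hq.1 hleft, ← _root_.sdiff_sdiff_eq_self hp.2,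
    ← _root_.sdiff_sdiff_eq_self hq.2, descStr_injOn sdiff_subset sdiff_subset hright]

end stringOfSubsets

theorem sCount_add_eq_card (r m k : ℕ) :
    sCount (r + m) r k =
      #{p ∈ (Icc 1 r).powerset ×ˢ (Icc 1 m).powerset | ∑ a ∈ p.1, a + ∑ b ∈ p.2, b = k} := by
  have himage : {w | Admissible (r + m) r w ∧ rho (r + m) r w = k} = stringOfSubsets r m ''
      ↑{p ∈ (Icc 1 r).powerset ×ˢ (Icc 1 m).powerset | ∑ a ∈ p.1, a + ∑ b ∈ p.2, b = k} := by
    ext w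
    constructor
    · rintro ⟨hw, hk⟩
      obtain ⟨p, hp, rfl⟩ := hw.exists_stringOfSubsets
      simp only [mem_product, mem_powerset] at hp
      rw [rho_stringOfSubsets hp.1 hp.2, Nat.cast_inj] at hk
      exact ⟨p, by simpa [hp.1, hp.2] using hk, rfl⟩
    · rintro ⟨p, hp, rfl⟩
      simp only [coe_filter, mem_product, mem_powerset, Set.mem_ofPred_eq] at hp
      exact ⟨admissible_stringOfSubsets hp.1.1, by rw [rho_stringOfSubsets hp.1.1 hp.1.2, hp.2]⟩
  rw [sCount, himage, injOn_stringOfSubsets.mono (filter_subset _ _) |>.ncard_image,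
    Set.ncard_coe_finset]

theorem card_filter_add_eq_sum_mul {α β : Type*} (s : Finset α) (t : Finset β) (f : α → ℕ)
    (g : β → ℕ) (k : ℕ) :
    #{p ∈ s ×ˢ t | f p.1 + g p.2 = k} =
      ∑ i ∈ range (k + 1), #{a ∈ s | f a = i} * #{b ∈ t | g b = k - i} := by
  rw [card_eq_sum_card_fiberwise (f := fun p => f p.1) (t := range (k + 1))]
  · refine sum_congr rfl fun i hi => ?_
    rw [← card_product]
    congr 1
    ext ⟨a, b⟩
    have := mem_range.1 hi
    simp only [mem_filter, mem_product]
    constructor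
    · rintro ⟨⟨⟨ha, hb⟩, hk⟩, rfl⟩
      exact ⟨⟨ha, rfl⟩, hb, by omega⟩
    · rintro ⟨⟨ha, rfl⟩, hb, hg⟩
      exact ⟨⟨⟨ha, hb⟩, by omega⟩, rfl⟩
  · intro p hp
    simp only [coe_filter, Set.mem_ofPred_eq] at hp
    simp only [coe_range, Set.mem_Iio]
    omega

theorem sCount_self_eq_card (c j : ℕ) :
    sCount c c j = #{A ∈ (Icc 1 c).powerset | ∑ a ∈ A, a = j} := by
  simpa [filter_map, Function.comp_def] using sCount_add_eq_card c 0 j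

theorem sCount_convolution_general (n r k : ℕ) (hr : r ≤ n) :
    sCount n r k = ∑ i ∈ Finset.range (k + 1),
      sCount r r i * sCount (n - r) (n - r) (k - i) := by
  obtain ⟨m, rfl⟩ := Nat.exists_eq_add_of_le hr
  simp only [Nat.add_sub_cancel_left, sCount_self_eq_card]
  rw [sCount_add_eq_card]
  exact card_filter_add_eq_sum_mul _ _ (fun A => ∑ a ∈ A, a) (fun B => ∑ b ∈ B, b) k

/-- the Cauchy-type convolution formula for the rank numbers:
`s(n,r,k) = Σ_{i=0}^{k} s(r,r,i) · s(n-r,n-r,k-i)`. -/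
theorem sCount_convolution (n r k : ℕ) (hr : r ≤ n) (hk : k ≤ Rnk n r) :
    sCount n r k = ∑ i ∈ Finset.range (k + 1),
      sCount r r i * sCount (n - r) (n - r) (k - i) :=
  sCount_convolution_general n r k hr
end
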